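/- Let V be a real vector space, T : V × V × V → V an ℝ-trilinear map which is symmetric in its first two arguments, T(x,y,z) = T(y,x,z), and satisfies the cyclic identity T(x,y,z) + T(z,x,y) + T(y,z,x) = 0, and let J : V → V be ℝ-linear with J ∘ J = −id such that T(Jx, Jy, z) = T(x,y,z) and T(x,y,Jz) = J(T(x,y,z)) for all x,y,z ∈ V. Then for every x ∈ V, setting y := Jx, all curvature terms vanish: T(x,x,x) = 0, T(y,y,y) = 0, T(x,y,x) = 0, T(x,x,y) = 0, T(x,y,y) = 0, and T(y,y,x) = 0; in particular the contractions SR_x := T(x,x,y) − T(x,y,x) and SR_y := T(y,x,y) − T(y,y,x) are zero. -/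

import Mathlib

/-!
Evaluating the cyclic identity at `(x, x, y)` and using the symmetry gives
`T x x y + 2 T x y x = 0`; at `y = x` this kills `T x x x`. Since `T x x` commutes with `J`,
`T x x (J x) = J (T x x x) = 0`, hence `T x (J x) x = 0`, and every remaining term is reduced to
one of these by `J`-invariance in the first two slots, `J`-linearity in the third, and symmetry.
-/

section SymmetricCyclic

variable {K V : Type*} [Field K] [AddCommGroup V] [Module K V]
  {T : V →ₗ[K] V →ₗ[K] V →ₗ[K] V}

theorem apply_self_self_add_two_smul_eq_zero (hsym : ∀ x y z : V, T x y z = T y x z)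
    (hcyc : ∀ x y z : V, T x y z + T z x y + T y z x = 0) (x y : V) :
    T x x y + (2 : K) • T x y x = 0 := by
  rw [← hcyc x x y, hsym y x x]
  module

theorem apply_self_self_self_eq_zero [CharZero K] (hsym : ∀ x y z : V, T x y z = T y x z)
    (hcyc : ∀ x y z : V, T x y z + T z x y + T y z x = 0) (x : V) :
    T x x x = 0 := by
  have h : (3 : K) • T x x x = 0 := by
    rw [← apply_self_self_add_two_smul_eq_zero hsym hcyc x x]
    module
  exact (smul_eq_zero.mp h).resolve_left three_ne_zero

theorem apply_self_eq_zero_of_apply_self_self_eq_zero [CharZero K]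
    (hsym : ∀ x y z : V, T x y z = T y x z)
    (hcyc : ∀ x y z : V, T x y z + T z x y + T y z x = 0) {x y : V} (h : T x x y = 0) :
    T x y x = 0 := by
  have h2 := apply_self_self_add_two_smul_eq_zero hsym hcyc x y
  rw [h, zero_add] at h2
  exact (smul_eq_zero.mp h2).resolve_left two_ne_zero

end SymmetricCyclic

theorem kaehler_curvature_terms_vanish_general
    {V : Type*} [AddCommGroup V] [Module ℝ V]
    (T : V →ₗ[ℝ] V →ₗ[ℝ] V →ₗ[ℝ] V) (J : V →ₗ[ℝ] V)
    (hsym : ∀ x y z : V, T x y z = T y x z)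
    (hcyc : ∀ x y z : V, T x y z + T z x y + T y z x = 0)
    (hTJJ : ∀ x y z : V, T (J x) (J y) z = T x y z)
    (hTJ : ∀ x y z : V, T x y (J z) = J (T x y z)) :
    ∀ x : V,
      T x x x = 0 ∧
      T (J x) (J x) (J x) = 0 ∧
      T x (J x) x = 0 ∧
      T x x (J x) = 0 ∧
      T x (J x) (J x) = 0 ∧
      T (J x) (J x) x = 0 ∧
      T x x (J x) - T x (J x) x = 0 ∧
      T (J x) x (J x) - T (J x) (J x) x = 0 := by
  intro x
  have hxxx : T x x x = 0 := apply_self_self_self_eq_zero hsym hcyc x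
  have hxxJ : T x x (J x) = 0 := by rw [hTJ, hxxx, map_zero]
  have hxJx : T x (J x) x = 0 := apply_self_eq_zero_of_apply_self_self_eq_zero hsym hcyc hxxJ
  have hxJJ : T x (J x) (J x) = 0 := by rw [hTJ, hxJx, map_zero]
  have hJJx : T (J x) (J x) x = 0 := by rw [hTJJ, hxxx]
  have hJJJ : T (J x) (J x) (J x) = 0 := by rw [hTJJ, hxxJ]
  refine ⟨hxxx, hJJJ, hxJx, hxxJ, hxJJ, hJJx, by rw [hxJx, hxxJ, sub_zero], ?_⟩
  rw [hsym (J x) x (J x), hxJJ, hJJx, sub_zero]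

theorem kaehler_curvature_terms_vanish
    {V : Type*} [AddCommGroup V] [Module ℝ V]
    (T : V →ₗ[ℝ] V →ₗ[ℝ] V →ₗ[ℝ] V) (J : V →ₗ[ℝ] V)
    (hJ : ∀ v : V, J (J v) = -v)
    (hsym : ∀ x y z : V, T x y z = T y x z)
    (hcyc : ∀ x y z : V, T x y z + T z x y + T y z x = 0)
    (hTJJ : ∀ x y z : V, T (J x) (J y) z = T x y z)
    (hTJ : ∀ x y z : V, T x y (J z) = J (T x y z)) :
    ∀ x : V,
      T x x x = 0 ∧
      T (J x) (J x) (J x) = 0 ∧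
      T x (J x) x = 0 ∧
      T x x (J x) = 0 ∧
      T x (J x) (J x) = 0 ∧
      T (J x) (J x) x = 0 ∧
      T x x (J x) - T x (J x) x = 0 ∧
      T (J x) x (J x) - T (J x) (J x) x = 0 :=
  kaehler_curvature_terms_vanish_general T J hsym hcyc hTJJ hTJ
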